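/- arXiv:2505.13717 — 3 statements merged into one kernel-verified Lean document; each statement's English description precedes it below -/
import Mathlib

section
/- Let L ≥ 2 be even. The set of domain-wall counts realized by configurations b : Fin L → Bool is exactly the set of even numbers {2n : 0 ≤ n ≤ L/2}. Consequently, for J^z ≠ 0, the Hamiltonian H_0 = −J^z ∑_i Z_i Z_{i+1} has exactly L/2 + 1 distinct eigenvalues, namely {−J^z (L − 4n) : 0 ≤ n ≤ L/2}, which are equally spaced with gap ΔE = 4|J^z|. -/
open Matrix

/-- The single-site Pauli-Z matrix at site `i` of an `L`-qubit register, in the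
computational basis indexed by `Fin L → Bool`. -/
noncomputable def PauliZ (L : ℕ) (i : Fin L) :
    Matrix (Fin L → Bool) (Fin L → Bool) ℂ :=
  Matrix.of fun b c => if b = c then (if b i then -1 else 1) else 0

/-- The Ising Hamiltonian `H₀ = -Jᶻ ∑ᵢ Zᵢ Zᵢ₊₁` with periodic boundary conditions. -/
noncomputable def isingH (L : ℕ) [NeZero L] (Jz : ℝ) :
    Matrix (Fin L → Bool) (Fin L → Bool) ℂ :=
  -((Jz : ℂ) • ∑ i : Fin L, PauliZ L i * PauliZ L (i + 1))

/-!
The diagonal entry of `H₀` at `b` is `-Jᶻ (L - 2 w)`, where `w` is the number of domain walls of `b`.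
Reading the bits in `ZMod 2`, a wall at `i` contributes `bᵢ + bᵢ₊₁`, and summing around the cycle
counts every bit twice, so `w` is even. Conversely, alternating the first `2n` sites and keeping
the rest constant gives exactly `2n` walls. For `Jᶻ ≠ 0` the levels `-Jᶻ (L - 4n)` are distinct.
-/

open Finset

theorem even_card_filter_ne_comp_perm {α : Type*} [Fintype α] (σ : Equiv.Perm α) (b : α → Bool) :
    Even #{a | b a ≠ b (σ a)} := by
  let x : α → ZMod 2 := fun a => if b a then 1 else 0
  have wall_eq : ∀ a, (if b a ≠ b (σ a) then 1 else 0 : ZMod 2) = x a + x (σ a) := by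
    intro a
    simp only [x]
    cases b a <;> cases b (σ a) <;> decide
  rw [← ZMod.natCast_eq_zero_iff_even, natCast_card_filter, sum_congr rfl fun a _ => wall_eq a,
    sum_add_distrib, Equiv.sum_comp σ x, ← two_mul, show (2 : ZMod 2) = 0 from rfl, zero_mul]

section DomainWalls

variable {L : ℕ} [NeZero L]

def domainWallCount (b : Fin L → Bool) : ℕ := #{i | b i ≠ b (i + 1)}

theorem even_domainWallCount (b : Fin L → Bool) : Even (domainWallCount b) :=
  even_card_filter_ne_comp_perm (Equiv.addRight 1) b

theorem domainWallCount_le (b : Fin L → Bool) : domainWallCount b ≤ L :=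
  (card_filter_le _ _).trans_eq (card_fin L)

theorem Fin.val_add_one_of_val_add_one_eq {i : Fin L} (h : i.val + 1 = L) : (i + 1).val = 0 := by
  rw [Fin.val_add, Fin.val_one', Nat.add_mod_mod, h, Nat.mod_self]

/-- Alternating `false, true, false, …` on the first `2n` sites and `false` afterwards puts the
walls exactly at the sites `i < 2n`; when `2n = L` the last one is the wrap-around wall. -/
theorem exists_domainWallCount_eq {n : ℕ} (hn : 2 * n ≤ L) :
    ∃ b : Fin L → Bool, domainWallCount b = 2 * n := by
  refine ⟨fun i => decide (i.val < 2 * n ∧ i.val % 2 = 1), ?_⟩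
  have walls : ∀ i : Fin L, (decide (i.val < 2 * n ∧ i.val % 2 = 1)
      ≠ decide ((i + 1).val < 2 * n ∧ (i + 1).val % 2 = 1)) ↔ i.val < 2 * n := by
    intro i
    rcases (Nat.succ_le_of_lt i.isLt).lt_or_eq with hlt | heq
    · rw [Fin.val_add_one_of_lt' hlt]; simp only [ne_eq, decide_eq_decide]; omega
    · rw [Fin.val_add_one_of_val_add_one_eq heq]; simp only [ne_eq, decide_eq_decide]; omega
  rw [domainWallCount, filter_congr fun i _ => walls i, Fin.card_filter_val_lt, min_eq_right hn]

theorem range_domainWallCount :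
    Set.range (domainWallCount (L := L)) = (2 * ·) '' Set.Iic (L / 2) := by
  ext m
  simp only [Set.mem_range, Set.mem_image, Set.mem_Iic]
  constructor
  · rintro ⟨b, rfl⟩
    obtain ⟨n, hn⟩ := even_domainWallCount b
    have := domainWallCount_le b
    exact ⟨n, by omega, by omega⟩
  · rintro ⟨n, hn, rfl⟩
    exact exists_domainWallCount_eq (by omega)

end DomainWalls

section Hamiltonian

variable {L : ℕ}

theorem PauliZ_eq_diagonal (i : Fin L) :
    PauliZ L i = diagonal fun b => if b i then -1 else 1 := by
  ext b c
  by_cases h : b = c <;> simp [PauliZ, h]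

theorem spin_mul_spin {R : Type*} [Ring R] (x y : Bool) :
    ((if x then -1 else 1) * (if y then -1 else 1) : R) = 1 - 2 * if x ≠ y then 1 else 0 := by
  cases x <;> cases y <;> norm_num

theorem isingH_apply_self [NeZero L] (Jz : ℝ) (b : Fin L → Bool) :
    isingH L Jz b b = -(Jz : ℂ) * (L - 2 * domainWallCount b) := by
  rw [isingH, Matrix.neg_apply, Matrix.smul_apply, Matrix.sum_apply]
  simp only [PauliZ_eq_diagonal, diagonal_mul_diagonal, diagonal_apply_eq, spin_mul_spin,
    sum_sub_distrib, ← mul_sum, domainWallCount, natCast_card_filter, sum_const, card_univ,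
    Fintype.card_fin, smul_eq_mul, nsmul_eq_mul, mul_one]
  ring

theorem setOf_isingH_apply_self [NeZero L] (Jz : ℝ) :
    {x : ℂ | ∃ b : Fin L → Bool, isingH L Jz b b = x}
      = (fun n : ℕ => -(Jz : ℂ) * (L - 4 * n)) '' Set.Iic (L / 2) := by
  have diag : (fun b => isingH L Jz b b)
      = (fun m : ℕ => -(Jz : ℂ) * (L - 2 * m)) ∘ domainWallCount :=
    funext (isingH_apply_self Jz)
  change Set.range _ = _
  rw [diag, Set.range_comp, range_domainWallCount, Set.image_image]
  refine Set.image_congr fun n _ => ?_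
  push_cast
  ring

theorem ising_energy_injective {Jz : ℝ} (hJ : Jz ≠ 0) :
    Function.Injective fun n : ℕ => -(Jz : ℂ) * (L - 4 * n) := by
  intro a c h
  have hJ' : -(Jz : ℂ) ≠ 0 := neg_ne_zero.mpr (Complex.ofReal_ne_zero.mpr hJ)
  have hac : (a : ℂ) = c := by linear_combination (-1 / 4 : ℂ) * mul_left_cancel₀ hJ' h
  exact_mod_cast hac

end Hamiltonian

theorem isingH_spectrum_general (L : ℕ) [NeZero L]
    (Jz : ℝ) (hJ : Jz ≠ 0) :
    (Set.range (fun b : Fin L → Bool =>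
        (Finset.univ.filter (fun i : Fin L => b i ≠ b (i + 1))).card)
      = {m : ℕ | ∃ n ≤ L / 2, m = 2 * n})
    ∧ ({x : ℂ | ∃ b : Fin L → Bool, isingH L Jz b b = x}
        = {x : ℂ | ∃ n ≤ L / 2, x = -(Jz : ℂ) * ((L : ℂ) - 4 * (n : ℂ))})
    ∧ ({x : ℂ | ∃ b : Fin L → Bool, isingH L Jz b b = x}.ncard = L / 2 + 1)
    ∧ (∀ n : ℕ, n < L / 2 →
        ‖((-(Jz : ℂ) * ((L : ℂ) - 4 * ((n + 1 : ℕ) : ℂ)))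
          - (-(Jz : ℂ) * ((L : ℂ) - 4 * (n : ℂ))))‖ = 4 * |Jz|) := by
  refine ⟨?_, ?_, ?_, fun n _ => ?_⟩
  · change Set.range domainWallCount = _
    rw [range_domainWallCount]
    ext m
    simp [eq_comm]
  · rw [setOf_isingH_apply_self]
    ext x
    simp [eq_comm]
  · rw [setOf_isingH_apply_self, (ising_energy_injective hJ).injOn.ncard_image,
      Set.ncard_Iic_nat]
  · rw [show -(Jz : ℂ) * (L - 4 * ((n + 1 : ℕ) : ℂ)) - -(Jz : ℂ) * (L - 4 * n)
        = ((4 * Jz : ℝ) : ℂ) by push_cast; ring,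
      Complex.norm_real, Real.norm_eq_abs, abs_mul, abs_of_pos four_pos]

/-- Let `L ≥ 2` be even. The set of domain-wall counts realized by configurations
`b : Fin L → Bool` is exactly `{2n : 0 ≤ n ≤ L/2}`. Consequently, for `Jᶻ ≠ 0`, the diagonal
Hamiltonian `H₀ = -Jᶻ ∑ᵢ Zᵢ Zᵢ₊₁` has as eigenvalues (= diagonal entries) exactly the set
`{-Jᶻ (L - 4n) : 0 ≤ n ≤ L/2}`, which has exactly `L/2 + 1` elements, equally spaced with
gap `ΔE = 4 |Jᶻ|`. -/
theorem isingH_spectrum (L : ℕ) [NeZero L] (hL : 2 ≤ L) (hLeven : Even L)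
    (Jz : ℝ) (hJ : Jz ≠ 0) :
    (Set.range (fun b : Fin L → Bool =>
        (Finset.univ.filter (fun i : Fin L => b i ≠ b (i + 1))).card)
      = {m : ℕ | ∃ n ≤ L / 2, m = 2 * n})
    ∧ ({x : ℂ | ∃ b : Fin L → Bool, isingH L Jz b b = x}
        = {x : ℂ | ∃ n ≤ L / 2, x = -(Jz : ℂ) * ((L : ℂ) - 4 * (n : ℂ))})
    ∧ ({x : ℂ | ∃ b : Fin L → Bool, isingH L Jz b b = x}.ncard = L / 2 + 1)
    ∧ (∀ n : ℕ, n < L / 2 →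
        ‖((-(Jz : ℂ) * ((L : ℂ) - 4 * ((n + 1 : ℕ) : ℂ)))
          - (-(Jz : ℂ) * ((L : ℂ) - 4 * (n : ℂ))))‖ = 4 * |Jz|) :=
  isingH_spectrum_general L Jz hJ
end

section
/- Let E be a complex inner product space and let 𝒳 : E → E be a self-adjoint linear isometric involution (𝒳 is ℂ-linear, ⟪𝒳u, v⟫ = ⟪u, 𝒳v⟫ for all u, v, and 𝒳 ∘ 𝒳 = id). Let ψ₀ and ψ₁ be unit vectors with ⟪ψ₀, ψ₁⟫ = 0, ⟪ψ₀, 𝒳ψ₀⟫ = 0 and ⟪ψ₁, 𝒳ψ₁⟫ = 0. Suppose θ ∈ [0, π/2], φ ∈ ℝ, ε ∈ {1, −1}, and the vector ψ = (cos θ) • ψ₀ + (sin θ · e^{iφ}) • ψ₁ satisfies 𝒳 ψ = ε • ψ. Then θ = π/4 and e^{iφ} • ψ₁ = ε • 𝒳 ψ₀; consequently ψ = (1/√2) • (ψ₀ + ε • 𝒳 ψ₀). -/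
open scoped ComplexInnerProductSpace

/-!
Write `a = ⟪ψ₁, 𝒳ψ₀⟫`. Since the diagonal entries `⟪ψᵢ, 𝒳ψᵢ⟫` vanish, pairing `𝒳ψ = εψ` with `ψ₁`
and with `ψ₀` gives `cos θ · a = ε sin θ e^{iφ}` and `sin θ e^{iφ} · conj a = ε cos θ`. Taking
absolute values forces `cos θ = sin θ`, hence `θ = π/4` and `a = ε e^{iφ}`. As `𝒳` is a
self-adjoint involution, `𝒳ψ₀` is a unit vector, so `|a| = 1` is the equality case of
Cauchy–Schwarz: `𝒳ψ₀ = a • ψ₁`.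
-/

theorem eq_of_mul_eq_of_mul_eq {K : Type*} [Field K] [LinearOrder K] [IsStrictOrderedRing K]
    {x y r : K} (hr : 0 ≤ r) (hxy : x * r = y) (hyx : y * r = x) : x = y := by
  have h : (x - y) * (1 + r) = 0 := by linear_combination hxy - hyx
  have hr' : 1 + r ≠ 0 := by positivity
  simpa [sub_eq_zero, hr'] using h

theorem Real.eq_pi_div_four_of_cos_eq_sin {θ : ℝ}
    (hθ : θ ∈ Set.Icc (-(Real.pi / 4)) (3 * Real.pi / 4)) (h : Real.cos θ = Real.sin θ) :
    θ = Real.pi / 4 := by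
  have hsin : Real.sin (Real.pi / 4 - θ) = Real.sin 0 := by
    rw [Real.sin_sub, Real.sin_pi_div_four, Real.cos_pi_div_four, h, Real.sin_zero, sub_self]
  have := Real.injOn_sin ⟨by linarith [hθ.2], by linarith [hθ.1]⟩
    ⟨by linarith [Real.pi_pos], by linarith [Real.pi_pos]⟩ hsin
  linarith

namespace LinearMap.IsSymmetric

open scoped InnerProductSpace

variable {𝕜 E : Type*} [RCLike 𝕜] [NormedAddCommGroup E] [InnerProductSpace 𝕜 E] {X : E →ₗ[𝕜] E}

theorem norm_map_of_involutive (hX : X.IsSymmetric) (hinv : ∀ u, X (X u) = u) (u : E) :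
    ‖X u‖ = ‖u‖ := by
  rw [norm_eq_sqrt_re_inner (𝕜 := 𝕜), norm_eq_sqrt_re_inner (𝕜 := 𝕜), hX, hinv]

theorem coeff_relations_of_map_eq_smul (hX : X.IsSymmetric)
    {ψ₀ ψ₁ : E} (hψ₀ : ‖ψ₀‖ = 1) (hψ₁ : ‖ψ₁‖ = 1) (horth : ⟪ψ₀, ψ₁⟫_𝕜 = 0)
    (h00 : ⟪ψ₀, X ψ₀⟫_𝕜 = 0) (h11 : ⟪ψ₁, X ψ₁⟫_𝕜 = 0) {α β ε : 𝕜}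
    (hfix : X (α • ψ₀ + β • ψ₁) = ε • (α • ψ₀ + β • ψ₁)) :
    α * ⟪ψ₁, X ψ₀⟫_𝕜 = ε * β ∧ β * starRingEnd 𝕜 ⟪ψ₁, X ψ₀⟫_𝕜 = ε * α := by
  have h10 : ⟪ψ₁, ψ₀⟫_𝕜 = 0 := by rw [← inner_conj_symm, horth, map_zero]
  have h01 : ⟪ψ₀, X ψ₁⟫_𝕜 = starRingEnd 𝕜 ⟪ψ₁, X ψ₀⟫_𝕜 := by rw [← hX, inner_conj_symm]
  constructor
  · simpa [inner_add_right, inner_smul_right, h10, h11, inner_self_eq_norm_sq_to_K, hψ₁]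
      using congrArg (⟪ψ₁, ·⟫_𝕜) hfix
  · simpa [inner_add_right, inner_smul_right, horth, h00, h01, inner_self_eq_norm_sq_to_K, hψ₀]
      using congrArg (⟪ψ₀, ·⟫_𝕜) hfix

theorem norm_coeff_eq_of_map_eq_smul (hX : X.IsSymmetric)
    {ψ₀ ψ₁ : E} (hψ₀ : ‖ψ₀‖ = 1) (hψ₁ : ‖ψ₁‖ = 1) (horth : ⟪ψ₀, ψ₁⟫_𝕜 = 0)
    (h00 : ⟪ψ₀, X ψ₀⟫_𝕜 = 0) (h11 : ⟪ψ₁, X ψ₁⟫_𝕜 = 0) {α β ε : 𝕜} (hε : ‖ε‖ = 1)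
    (hfix : X (α • ψ₀ + β • ψ₁) = ε • (α • ψ₀ + β • ψ₁)) : ‖α‖ = ‖β‖ := by
  obtain ⟨h₁, h₀⟩ := hX.coeff_relations_of_map_eq_smul hψ₀ hψ₁ horth h00 h11 hfix
  refine eq_of_mul_eq_of_mul_eq (norm_nonneg ⟪ψ₁, X ψ₀⟫_𝕜) ?_ ?_
  · simpa only [norm_mul, hε, one_mul] using congrArg norm h₁
  · simpa only [norm_mul, RCLike.norm_conj, hε, one_mul] using congrArg norm h₀

end LinearMap.IsSymmetric

theorem smul_eq_of_inner_eq {𝕜 E : Type*} [RCLike 𝕜] [NormedAddCommGroup E]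
    [InnerProductSpace 𝕜 E] {u v : E} (hu : ‖u‖ = 1) (hv : ‖v‖ = 1) {w : 𝕜} (hw : ‖w‖ = 1)
    (h : inner 𝕜 u v = w) : w • u = v := by
  have hwu : ‖w • u‖ = 1 := by rw [norm_smul, hw, hu, one_mul]
  refine (inner_eq_one_iff_of_norm_eq_one (𝕜 := 𝕜) hwu hv).mp ?_
  rw [inner_smul_left, h, RCLike.conj_mul, hw]
  norm_num

/-- Let `𝒳` be a self-adjoint linear isometric involution of a complex inner product space,
let `ψ₀, ψ₁` be orthonormal vectors with `⟪ψ₀, 𝒳ψ₀⟫ = ⟪ψ₁, 𝒳ψ₁⟫ = 0`, and suppose the state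
`ψ = cos θ • ψ₀ + (sin θ · e^{iφ}) • ψ₁` (with `θ ∈ [0, π/2]`, `φ ∈ ℝ`) satisfies
`𝒳 ψ = ε • ψ` with `ε = ±1`.  Then `θ = π/4` and `e^{iφ} • ψ₁ = ε • 𝒳 ψ₀`; consequently
`ψ = (1/√2) • (ψ₀ + ε • 𝒳 ψ₀)`. -/
theorem parity_eigenstate_structure
    {E : Type*} [NormedAddCommGroup E] [InnerProductSpace ℂ E]
    (X : E →ₗ[ℂ] E)
    (hsa : ∀ u v : E, ⟪X u, v⟫ = ⟪u, X v⟫)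
    (hinv : ∀ u : E, X (X u) = u)
    (ψ₀ ψ₁ : E) (hψ₀ : ‖ψ₀‖ = 1) (hψ₁ : ‖ψ₁‖ = 1)
    (horth : ⟪ψ₀, ψ₁⟫ = 0)
    (h00 : ⟪ψ₀, X ψ₀⟫ = 0) (h11 : ⟪ψ₁, X ψ₁⟫ = 0)
    (θ φ : ℝ) (hθ : θ ∈ Set.Icc 0 (Real.pi / 2))
    (ε : ℂ) (hε : ε = 1 ∨ ε = -1)
    (ψ : E)
    (hψ : ψ = (Real.cos θ : ℂ) • ψ₀
      + ((Real.sin θ : ℂ) * Complex.exp (Complex.I * (φ : ℂ))) • ψ₁)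
    (hfix : X ψ = ε • ψ) :
    θ = Real.pi / 4
    ∧ Complex.exp (Complex.I * (φ : ℂ)) • ψ₁ = ε • X ψ₀
    ∧ ψ = (((Real.sqrt 2)⁻¹ : ℝ) : ℂ) • (ψ₀ + ε • X ψ₀) := by
  have hX : X.IsSymmetric := hsa
  rw [hψ] at hfix
  set z := Complex.exp (Complex.I * (φ : ℂ))
  have hz : ‖z‖ = 1 := Complex.norm_exp_I_mul_ofReal φ
  have hε_sq : ε * ε = 1 := by rcases hε with rfl | rfl <;> norm_num
  have hε_norm : ‖ε‖ = 1 := by rcases hε with rfl | rfl <;> norm_num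
  obtain ⟨hθ₀, hθ₁⟩ := hθ
  have hπ := Real.pi_pos
  have hcos : 0 ≤ Real.cos θ := Real.cos_nonneg_of_mem_Icc ⟨by linarith, hθ₁⟩
  have hsin : 0 ≤ Real.sin θ := Real.sin_nonneg_of_nonneg_of_le_pi hθ₀ (by linarith)
  have hcos_eq_sin : Real.cos θ = Real.sin θ := by
    have h : ‖(Real.cos θ : ℂ)‖ = ‖(Real.sin θ : ℂ) * z‖ :=
      hX.norm_coeff_eq_of_map_eq_smul hψ₀ hψ₁ horth h00 h11 hε_norm hfix
    rwa [norm_mul, Complex.norm_of_nonneg hcos, Complex.norm_of_nonneg hsin, hz, mul_one] at h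
  have hθ_eq : θ = Real.pi / 4 :=
    Real.eq_pi_div_four_of_cos_eq_sin ⟨by linarith, by linarith⟩ hcos_eq_sin
  have hcos_val : Real.cos θ = (Real.sqrt 2)⁻¹ := by
    rw [hθ_eq, Real.cos_pi_div_four, Real.sqrt_div_self]
  have hcos_ne : (Real.cos θ : ℂ) ≠ 0 := by
    rw [hcos_val]; exact_mod_cast inv_ne_zero (by positivity)
  have ha : ⟪ψ₁, X ψ₀⟫ = ε * z := by
    refine mul_left_cancel₀ hcos_ne ?_
    rw [(hX.coeff_relations_of_map_eq_smul hψ₀ hψ₁ horth h00 h11 hfix).1, hcos_eq_sin]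
    ring
  have hzψ₁ : z • ψ₁ = ε • X ψ₀ := by
    have h := smul_eq_of_inner_eq hψ₁ (by rw [hX.norm_map_of_involutive hinv, hψ₀])
      (by rw [norm_mul, hε_norm, hz, one_mul]) ha
    rw [← h, smul_smul, ← mul_assoc, hε_sq, one_mul]
  refine ⟨hθ_eq, hzψ₁, ?_⟩
  rw [hψ, ← hcos_eq_sin, mul_smul, hzψ₁, ← smul_add, hcos_val]
end

section
/- Let L ≥ 1 and c : Fin L → ZMod 2. For 0 ≤ j ≤ L−2 let U_j be the CNOT update with control site j+1 and target site j, i.e. U_j(b) = Function.update b j (b j + b (j+1)) (here j+1 is the ordinary successor, not cyclic). Then applying the updates to c in the order U_{L−2}, U_{L−3}, …, U_1, U_0 produces the configuration j ↦ ∑_{k : j ≤ k ≤ L−1} c k; that is, the cascade of L−1 CNOT gates implements the map Φ₀⁻¹ sending each bit to the XOR of itself with all the bits to its right. -/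
/-!
Gate `U_j` fires only after `U_{L-2}, …, U_{j+1}`, which never touch sites `≤ j`. So when it
fires, site `j` still holds `c j` while site `j + 1` already holds the suffix sum `S (j + 1)`,
and the gate writes `c j + S (j + 1) = S j`.
-/

section CnotCascade

open Finset

variable {M : Type*} [AddCommMonoid M] {L : ℕ}

def suffixSum (c : Fin L → M) (j : Fin L) : M := ∑ k ∈ Ici j, c k

theorem suffixSum_eq_self_of_val_add_one_eq (c : Fin L → M) {j : Fin L} (hj : (j : ℕ) + 1 = L) :
    suffixSum c j = c j := by
  have : Ici j = {j} := by
    ext k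
    simp only [mem_Ici, mem_singleton, Fin.le_def, Fin.ext_iff]
    omega
  rw [suffixSum, this, sum_singleton]

theorem suffixSum_eq_add_suffixSum_succ (c : Fin L → M) {m : ℕ} (hm : m + 1 < L) :
    suffixSum c ⟨m, by omega⟩ = c ⟨m, by omega⟩ + suffixSum c ⟨m + 1, hm⟩ := by
  have : Ici (⟨m, by omega⟩ : Fin L) = insert ⟨m, by omega⟩ (Ici ⟨m + 1, hm⟩) := by
    ext k
    simp only [mem_Ici, mem_insert, Fin.le_def, Fin.ext_iff]
    omega
  rw [suffixSum, this, sum_insert (by simp [Fin.le_def]), suffixSum]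

def cnotGate (j : Fin (L - 1)) (b : Fin L → M) : Fin L → M :=
  let site : Fin L := ⟨j, j.isLt.trans_le (Nat.sub_le L 1)⟩
  Function.update b site (b site + b ⟨j + 1, Nat.add_lt_of_lt_sub j.isLt⟩)

/-- The state of the cascade once the gates at sites `m, …, L - 2` have acted. -/
def partialSuffixSum (c : Fin L → M) (m : ℕ) (j : Fin L) : M :=
  if m ≤ j then suffixSum c j else c j

theorem cnotGate_partialSuffixSum (c : Fin L → M) (m : Fin (L - 1)) :
    cnotGate m (partialSuffixSum c (m + 1)) = partialSuffixSum c m := by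
  funext j
  by_cases hj : j = ⟨m, by omega⟩
  · subst hj
    simp [cnotGate, partialSuffixSum, suffixSum_eq_add_suffixSum_succ c (m := m) (by omega)]
  · have : (j : ℕ) ≠ m := fun h => hj (Fin.ext h)
    have hcond : (m : ℕ) + 1 ≤ j ↔ (m : ℕ) ≤ j := by omega
    simp only [cnotGate, Function.update_of_ne hj, partialSuffixSum, hcond]

theorem foldr_drop_finRange_cnotGate (c : Fin L → M) {m : ℕ} (hm : m ≤ L - 1) :
    ((List.finRange (L - 1)).drop m).foldr cnotGate c = partialSuffixSum c m := by
  induction hm using Nat.decreasingInduction with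
  | self =>
    funext j
    rw [List.drop_of_length_le (by simp), List.foldr_nil, partialSuffixSum]
    split_ifs with hj
    · exact (suffixSum_eq_self_of_val_add_one_eq c (by omega)).symm
    · rfl
  | of_succ k hk ih =>
    rw [List.drop_eq_getElem_cons (by simpa using hk), List.foldr_cons, ih]
    simpa using cnotGate_partialSuffixSum c ⟨k, hk⟩

end CnotCascade

/-- A cascade of `L-1` CNOT gates implements the map `Φ₀⁻¹`.  For `0 ≤ j ≤ L-2` let `U_j` be
the CNOT update with control site `j+1` and target site `j` (here `j+1` is the ordinary
successor, not cyclic), `U_j(b) = Function.update b j (b j + b (j+1))`.  Applying the updates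
to `c` in the order `U_{L-2}, U_{L-3}, …, U_1, U_0` produces the suffix-sum configuration
`j ↦ ∑_{k : j ≤ k} c k`, i.e. each bit becomes the XOR of itself with all bits to its
right. -/
theorem cnot_cascade_eq_suffix_sums (L : ℕ) (c : Fin L → ZMod 2) :
    (List.finRange (L - 1)).foldr
        (fun (j : Fin (L - 1)) (b : Fin L → ZMod 2) =>
          Function.update b ⟨j.1, by omega⟩
            (b ⟨j.1, by have := j.isLt; omega⟩ + b ⟨j.1 + 1, by have := j.isLt; omega⟩))
        c
      = fun j : Fin L => ∑ k ∈ Finset.univ.filter (fun k : Fin L => j ≤ k), c k := by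
  funext j
  rw [Finset.filter_le_eq_Ici]
  exact congrFun (foldr_drop_finRange_cnotGate c (Nat.zero_le (L - 1))) j
end
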